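/- arXiv:2401.05639 — 2 statements merged into one kernel-verified Lean document; each statement's English description precedes it below -/
import Mathlib

section
/- For any constants k > 0 and D > 0, there exists ε̄ > 0 such that for every ŝ ∈ (−1,1)^M with ‖ε(ŝ)‖ > ε̄, one has −k · ε(ŝ)ᵀ J(ŝ) ŝ + D ≤ 0, where ε and J act componentwise via ε(x) = ln((1+x)/(1−x)) and J(x) = 2/(1−x²) (so J(ŝ) is the diagonal matrix with entries J(ŝ_l)). -/
noncomputable def epsFn (x : ℝ) : ℝ := Real.log ((1 + x) / (1 - x))

noncomputable def Jfn (x : ℝ) : ℝ := 2 / (1 - x ^ 2)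

lemma key (x : ℝ) (hx : x ∈ Set.Ioo (-1 : ℝ) 1) :
    (epsFn x) ^ 2 ≤ epsFn x * Jfn x * x := by
  obtain ⟨h1, h2⟩ := hx
  have hp : (0:ℝ) < 1 + x := by linarith
  have hm : (0:ℝ) < 1 - x := by linarith
  have hq : (0:ℝ) < (1 + x) / (1 - x) := by positivity
  set t := epsFn x with ht
  have hexp : Real.exp t = (1 + x) / (1 - x) := Real.exp_log hq
  have hexpneg : Real.exp (-t) = (1 - x) / (1 + x) := by
    rw [Real.exp_neg, hexp]
    field_simp
  have hsinh : Real.sinh t = Jfn x * x := by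
    rw [Real.sinh_eq, hexp, hexpneg, Jfn]
    have : 1 - x ^ 2 = (1 - x) * (1 + x) := by ring
    rw [this]
    field_simp
    ring
  have hts : t * Real.sinh t ≥ t ^ 2 := by
    rcases le_or_gt 0 t with h | h
    · have := Real.self_le_sinh_iff.mpr h
      nlinarith
    · have : Real.sinh t < t := by
        have := Real.self_lt_sinh_iff (x := -t) |>.mpr (by linarith)
        rw [Real.sinh_neg] at this; linarith
      nlinarith
  calc t ^ 2 ≤ t * Real.sinh t := hts
    _ = t * Jfn x * x := by rw [hsinh]; ring

theorem stmt_6 (M : ℕ) (k D : ℝ) (hk : 0 < k) (hD : 0 < D) :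
    ∃ εbar : ℝ, 0 < εbar ∧
      ∀ shat : Fin M → ℝ, (∀ l, shat l ∈ Set.Ioo (-1 : ℝ) 1) →
        Real.sqrt (∑ l, (epsFn (shat l)) ^ 2) > εbar →
        -k * (∑ l, epsFn (shat l) * Jfn (shat l) * shat l) + D ≤ 0 := by
  refine ⟨Real.sqrt (D / k), Real.sqrt_pos.mpr (by positivity), ?_⟩
  intro shat hmem hgt
  have hsum : (∑ l, (epsFn (shat l)) ^ 2) > D / k := by
    have h0 : (0:ℝ) ≤ ∑ l, (epsFn (shat l)) ^ 2 := by positivity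
    nlinarith [Real.sq_sqrt h0, Real.sq_sqrt (le_of_lt (div_pos hD hk)),
      Real.sqrt_nonneg (D / k), Real.sqrt_nonneg (∑ l, (epsFn (shat l)) ^ 2)]
  have hle : (∑ l, (epsFn (shat l)) ^ 2) ≤
      ∑ l, epsFn (shat l) * Jfn (shat l) * shat l :=
    Finset.sum_le_sum fun l _ => key (shat l) (hmem l)
  have : D / k < ∑ l, epsFn (shat l) * Jfn (shat l) * shat l := lt_of_lt_of_le hsum hle
  have := (div_lt_iff₀ hk).mp this
  nlinarith
end

section
/- Let f : [0,∞) → ℝ be nonnegative, bounded, and uniformly continuous, and let τ > 0. If lim_{t→∞} ∫_t^{t+τ} f(s) ds = 0, then f(t) → 0 as t → ∞. -/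
open MeasureTheory in
theorem stmt_13 (f : ℝ → ℝ) (τ : ℝ) (hτ : 0 < τ)
    (hnn : ∀ t, 0 ≤ t → 0 ≤ f t)
    (hbd : ∃ C, ∀ t, 0 ≤ t → f t ≤ C)
    (huc : UniformContinuousOn f (Set.Ici (0 : ℝ)))
    (hint : Filter.Tendsto (fun t => ∫ s in t..(t + τ), f s) Filter.atTop (nhds 0)) :
    Filter.Tendsto f Filter.atTop (nhds 0) := by
  have hcont : ContinuousOn f (Set.Ici (0:ℝ)) := huc.continuousOn
  rw [Metric.tendsto_atTop] at hint ⊢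
  intro ε hε
  obtain ⟨δ, hδ, hδ'⟩ := (Metric.uniformContinuousOn_iff.mp huc) (ε/2) (by linarith)
  set η : ℝ := min (δ/2) τ with hηdef
  have hη : 0 < η := lt_min (by linarith) hτ
  have hηε : 0 < η * (ε/2) := mul_pos hη (by linarith)
  obtain ⟨N, hN⟩ := hint (η * (ε/2)) hηε
  refine ⟨max N 0, fun t ht => ?_⟩
  have htN : N ≤ t := le_trans (le_max_left _ _) ht
  have ht0 : (0:ℝ) ≤ t := le_trans (le_max_right _ _) ht
  rw [Real.dist_eq, sub_zero, abs_of_nonneg (hnn t ht0)]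
  by_contra hcon
  push_neg at hcon
  -- f s ≥ ε/2 on [t, t+η]
  have hlow : ∀ s ∈ Set.Icc t (t + η), ε/2 ≤ f s := by
    intro s hs
    have hs0 : (0:ℝ) ≤ s := le_trans ht0 hs.1
    have hd : dist s t < δ := by
      rw [Real.dist_eq, abs_of_nonneg (by linarith [hs.1])]
      have : η ≤ δ/2 := min_le_left _ _
      linarith [hs.2]
    have := hδ' s hs0 t ht0 hd
    rw [Real.dist_eq] at this
    have := abs_lt.mp this
    linarith [this.1]
  have hsub1 : Set.uIcc t (t + η) ⊆ Set.Ici (0:ℝ) := by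
    rw [Set.uIcc_of_le (by linarith)]
    exact fun x hx => le_trans ht0 hx.1
  have hsub2 : Set.uIcc (t + η) (t + τ) ⊆ Set.Ici (0:ℝ) := by
    rw [Set.uIcc_of_le (by linarith [min_le_right (δ/2) τ])]
    exact fun x hx => Set.mem_Ici.mpr (by linarith [hx.1])
  have hi1 : IntervalIntegrable f volume t (t + η) :=
    (hcont.mono hsub1).intervalIntegrable
  have hi2 : IntervalIntegrable f volume (t + η) (t + τ) :=
    (hcont.mono hsub2).intervalIntegrable
  have hle1 : η * (ε/2) ≤ ∫ s in t..(t + η), f s := by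
    have hc : IntervalIntegrable (fun _ : ℝ => ε/2) volume t (t + η) :=
      intervalIntegrable_const
    have := intervalIntegral.integral_mono_on (by linarith) hc hi1 hlow
    rwa [intervalIntegral.integral_const, add_sub_cancel_left, smul_eq_mul] at this
  have hle2 : (0:ℝ) ≤ ∫ s in (t + η)..(t + τ), f s := by
    apply intervalIntegral.integral_nonneg (by linarith [min_le_right (δ/2) τ])
    intro u hu
    exact hnn u (by linarith [hu.1])
  have hsplit : (∫ s in t..(t + τ), f s)
      = (∫ s in t..(t + η), f s) + ∫ s in (t + η)..(t + τ), f s :=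
    (intervalIntegral.integral_add_adjacent_intervals hi1 hi2).symm
  have hbig : η * (ε/2) ≤ ∫ s in t..(t + τ), f s := by
    rw [hsplit]; linarith
  have := hN t htN
  rw [Real.dist_eq, sub_zero] at this
  have := abs_lt.mp this
  linarith [this.2]
end
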